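/- For every real α with α ∉ {0, 1}, the Rényi entropy S_α is not a monotone under correlating-catalytic transitions: there exist full-rank density matrices ρ, ρ' of the same finite dimension, a finite-dimensional density matrix σ, and a unitary U such that tr₂[U(ρ ⊗ σ)U†] = ρ', tr₁[U(ρ ⊗ σ)U†] = σ, and S_α(ρ') < S_α(ρ). -/

import Mathlib

open scoped Kronecker ComplexOrder
open Matrix

noncomputable section

/-- `ρ` is a density matrix: positive semidefinite with unit trace. -/
def IsDensityMatrix {ι : Type*} [Fintype ι] (ρ : Matrix ι ι ℂ) : Prop :=
  ρ.PosSemidef ∧ ρ.trace = 1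

/-- Partial trace over the second tensor factor. -/
def ptrace2 {ι κ : Type*} [Fintype κ] (M : Matrix (ι × κ) (ι × κ) ℂ) : Matrix ι ι ℂ :=
  Matrix.of fun i j => ∑ k, M (i, k) (j, k)

/-- Partial trace over the first tensor factor. -/
def ptrace1 {ι κ : Type*} [Fintype ι] (M : Matrix (ι × κ) (ι × κ) ℂ) : Matrix κ κ ℂ :=
  Matrix.of fun i j => ∑ k, M (k, i) (k, j)

/-- Dephasing (decoherence) channel in the fixed (standard) orthonormal basis `{|j⟩}`:
`D[σ] = ∑ j ⟨j|σ|j⟩ |j⟩⟨j|`. -/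
def deph {ι : Type*} [DecidableEq ι] (M : Matrix ι ι ℂ) : Matrix ι ι ℂ :=
  Matrix.diagonal fun j => M j j

/-- The eigenvalue list of a matrix (junk value `0` if not Hermitian). -/
def eigs {ι : Type*} [Fintype ι] [DecidableEq ι] (ρ : Matrix ι ι ℂ) : ι → ℝ :=
  if h : ρ.IsHermitian then h.eigenvalues else 0

/-- The spectrum of a matrix, as a multiset of real eigenvalues (with multiplicity). -/
def spectra {ι : Type*} [Fintype ι] [DecidableEq ι] (ρ : Matrix ι ι ℂ) : Multiset ℝ :=
  Finset.univ.val.map (eigs ρ)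

/-- von Neumann entropy `S(ρ) = -tr(ρ log ρ)`, i.e. the Shannon entropy
of the eigenvalue list (natural logarithm). -/
def vN {ι : Type*} [Fintype ι] [DecidableEq ι] (ρ : Matrix ι ι ℂ) : ℝ :=
  ∑ i, Real.negMulLog (eigs ρ i)

/-- Maximally mixed state `𝟙_d = (1/d)·I_d`. -/
def mm (d : ℕ) : Matrix (Fin d) (Fin d) ℂ :=
  (d : ℂ)⁻¹ • (1 : Matrix (Fin d) (Fin d) ℂ)

/-- Rényi-`α` entropy `S_α(ρ) = (1/(1-α)) log tr(ρ^α)`, computed from the eigenvalues. -/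
def renyi (α : ℝ) {ι : Type*} [Fintype ι] [DecidableEq ι] (ρ : Matrix ι ι ℂ) : ℝ :=
  (1 - α)⁻¹ * Real.log (∑ i, eigs ρ i ^ α)

/-!
All states are diagonal, so a permutation of the joint levels of system and catalyst acts as a
classical transition, and the partial traces are sums of products. Swapping the levels
`(0,1) ↔ (1,0)` and `(1,1) ↔ (2,0)` turns `p(t) ⊗ q(t)` into a joint state whose marginals are
`p'(t)` and `q(t)` again; here `p(t) = ((1 + t)/21, 4/21, (16 - t)/21)` and `p'(0) = p(0)`.
Since the spectrum `(1, 4, 16)/21` at `t = 0` is geometric, the derivative at `0` of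
`∑ p'ᵢ(t)^α - ∑ pᵢ(t)^α` is `-(α/35) (1/21)^(α-1) (4^(α-1) - 1)²`, which vanishes only for
`α ∈ {0, 1}`. So `t = 0` is not a local minimum of `(1 - α) (∑ p'ᵢ^α - ∑ pᵢ^α)`, which therefore
takes negative values at some small `t`, i.e. `S_α(p'(t)) < S_α(p(t))`.
-/

section DiagonalStates

variable {ι : Type*} [Fintype ι] [DecidableEq ι]

lemma spectra_diagonal_ofReal (d : ι → ℝ) :
    spectra (diagonal fun i => (d i : ℂ)) = Finset.univ.val.map d := by
  have hH : (diagonal fun i => (d i : ℂ)).IsHermitian :=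
    isHermitian_diagonal_of_self_adjoint _ (funext fun i => Complex.conj_ofReal (d i))
  have hroots := hH.roots_charpoly_eq_eigenvalues
  rw [charpoly_diagonal, Polynomial.roots_prod _ _ (Finset.prod_ne_zero_iff.mpr
    fun i _ => Polynomial.X_sub_C_ne_zero _)] at hroots
  simp only [Polynomial.roots_X_sub_C, Multiset.bind_singleton] at hroots
  rw [spectra, eigs, dif_pos hH]
  refine (Multiset.map_injective Complex.ofReal_injective ?_).symm
  simpa [Multiset.map_map] using hroots

lemma renyi_diagonal_ofReal (α : ℝ) (d : ι → ℝ) :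
    renyi α (diagonal fun i => (d i : ℂ)) = (1 - α)⁻¹ * Real.log (∑ i, d i ^ α) := by
  have h := congrArg (fun s => (s.map (· ^ α)).sum) (spectra_diagonal_ofReal d)
  simp only [spectra, Multiset.map_map] at h
  exact congrArg (fun x => (1 - α)⁻¹ * Real.log x) h

lemma isDensityMatrix_diagonal_ofReal {d : ι → ℝ} (h0 : ∀ i, 0 ≤ d i) (h1 : ∑ i, d i = 1) :
    IsDensityMatrix (diagonal fun i => (d i : ℂ)) :=
  ⟨posSemidef_diagonal_iff.mpr fun i => Complex.zero_le_real.mpr (h0 i), by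
    rw [trace_diagonal, ← Complex.ofReal_sum, h1, Complex.ofReal_one]⟩

lemma rank_diagonal_ofReal {d : ι → ℝ} (h : ∀ i, d i ≠ 0) :
    (diagonal fun i => (d i : ℂ)).rank = Fintype.card ι := by
  rw [rank_diagonal, Fintype.card_subtype]
  simp [h]

lemma permMatrix_mem_unitaryGroup (e : Equiv.Perm ι) :
    e.permMatrix ℂ ∈ unitaryGroup ι ℂ := by
  rw [mem_unitaryGroup_iff, star_eq_conjTranspose, conjTranspose_permMatrix, ← permMatrix_mul,
    inv_mul_cancel, permMatrix_one]

lemma permMatrix_mul_diagonal_mul_conjTranspose (e : Equiv.Perm ι) (d : ι → ℂ) :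
    e.permMatrix ℂ * diagonal d * (e.permMatrix ℂ)ᴴ = diagonal (d ∘ e) := by
  rw [conjTranspose_permMatrix, PEquiv.toMatrix_toPEquiv_mul, PEquiv.mul_toMatrix_toPEquiv,
    submatrix_submatrix]
  exact submatrix_diagonal_equiv d e

end DiagonalStates

section PartialTrace

variable {ι κ : Type*} [DecidableEq ι] [DecidableEq κ]

lemma ptrace2_diagonal [Fintype κ] (d : ι × κ → ℂ) :
    ptrace2 (diagonal d) = diagonal fun i => ∑ k, d (i, k) := by
  ext i j
  by_cases h : i = j
  · simp [ptrace2, h]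
  · simp [ptrace2, diagonal_apply, h]

lemma ptrace1_diagonal [Fintype ι] (d : ι × κ → ℂ) :
    ptrace1 (diagonal d) = diagonal fun k => ∑ i, d (i, k) := by
  ext k l
  by_cases h : k = l
  · simp [ptrace1, h]
  · simp [ptrace1, diagonal_apply, h]

variable [Fintype ι] [Fintype κ]

lemma ptrace2_permMatrix_conj_kronecker_diagonal (e : Equiv.Perm (ι × κ)) (p : ι → ℝ)
    (q : κ → ℝ) :
    ptrace2 (e.permMatrix ℂ * (diagonal (fun i => (p i : ℂ)) ⊗ₖ diagonal (fun k => (q k : ℂ)))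
        * (e.permMatrix ℂ)ᴴ) =
      diagonal fun i => ((∑ k, p (e (i, k)).1 * q (e (i, k)).2 : ℝ) : ℂ) := by
  rw [diagonal_kronecker_diagonal, permMatrix_mul_diagonal_mul_conjTranspose, ptrace2_diagonal]
  push_cast
  rfl

lemma ptrace1_permMatrix_conj_kronecker_diagonal (e : Equiv.Perm (ι × κ)) (p : ι → ℝ)
    (q : κ → ℝ) :
    ptrace1 (e.permMatrix ℂ * (diagonal (fun i => (p i : ℂ)) ⊗ₖ diagonal (fun k => (q k : ℂ)))
        * (e.permMatrix ℂ)ᴴ) =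
      diagonal fun k => ((∑ i, p (e (i, k)).1 * q (e (i, k)).2 : ℝ) : ℂ) := by
  rw [diagonal_kronecker_diagonal, permMatrix_mul_diagonal_mul_conjTranspose, ptrace1_diagonal]
  push_cast
  rfl

end PartialTrace

section RealAnalysis

open Filter Topology

lemma exists_lt_of_hasDerivAt_ne_zero {f : ℝ → ℝ} {f' a : ℝ} (hf : HasDerivAt f f' a)
    (hf' : f' ≠ 0) {s : Set ℝ} (hs : s ∈ 𝓝 a) : ∃ t ∈ s, f t < f a := by
  by_contra! h
  exact hf' (IsLocalMin.hasDerivAt_eq_zero (mem_of_superset hs h) hf)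

lemma hasDerivAt_sum_rpow {ι : Type*} [Fintype ι] {f : ι → ℝ → ℝ} {f' : ι → ℝ} {x : ℝ}
    (α : ℝ) (hf : ∀ i, HasDerivAt (f i) (f' i) x) (hx : ∀ i, f i x ≠ 0) :
    HasDerivAt (fun t => ∑ i, f i t ^ α) (∑ i, f' i * α * f i x ^ (α - 1)) x :=
  HasDerivAt.fun_sum fun i _ => (hf i).rpow_const (Or.inl (hx i))

lemma inv_mul_log_lt_inv_mul_log {a b c : ℝ} (ha : 0 < a) (hb : 0 < b) (h : c * (a - b) < 0) :
    c⁻¹ * Real.log a < c⁻¹ * Real.log b := by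
  rcases lt_trichotomy c 0 with hc | rfl | hc
  · exact mul_lt_mul_of_neg_left (Real.log_lt_log hb (by nlinarith)) (inv_lt_zero.mpr hc)
  · simp at h
  · exact mul_lt_mul_of_pos_left (Real.log_lt_log ha (by nlinarith)) (inv_pos.mpr hc)

lemma rpow_sub_two_mul_rpow_add_rpow_ne_zero {c r β : ℝ} (hc : 0 < c) (hr₀ : 0 < r)
    (hr₁ : r ≠ 1) (hβ : β ≠ 0) : c ^ β - 2 * (r * c) ^ β + (r * r * c) ^ β ≠ 0 := by
  have hsq : c ^ β - 2 * (r * c) ^ β + (r * r * c) ^ β = c ^ β * (r ^ β - 1) ^ 2 := by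
    rw [Real.mul_rpow hr₀.le hc.le, Real.mul_rpow (by positivity) hc.le,
      Real.mul_rpow hr₀.le hr₀.le]
    ring
  have hne : r ^ β ≠ 1 := by
    rw [← Real.rpow_zero r]
    exact fun h => hβ ((Real.rpow_right_inj hr₀ hr₁).mp h)
  rw [hsq]
  exact mul_ne_zero (by positivity) (pow_ne_zero 2 (sub_ne_zero.mpr hne))

end RealAnalysis

def inputProb (t : ℝ) : Fin 3 → ℝ := ![(1 + t) / 21, 4 / 21, (16 - t) / 21]

-- Solves `q₀ = p₀ + p₁ q₁`, so that `levelSwap` hands the catalyst back unchanged.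
def catalystProb (t : ℝ) : Fin 2 → ℝ := ![(5 + t) / 25, (20 - t) / 25]

def outputProb (t : ℝ) : Fin 3 → ℝ :=
  ![(5 + t) ^ 2 / 525, (100 + 30 * t - 2 * t ^ 2) / 525, (20 - t) ^ 2 / 525]

def levelSwap : Equiv.Perm (Fin 3 × Fin 2) := Equiv.swap (0, 1) (1, 0) * Equiv.swap (1, 1) (2, 0)

lemma sum_levelSwap_fst (t : ℝ) (i : Fin 3) :
    ∑ k, inputProb t (levelSwap (i, k)).1 * catalystProb t (levelSwap (i, k)).2 =
      outputProb t i := by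
  fin_cases i <;>
    simp [Fin.sum_univ_two, levelSwap, Equiv.swap_apply_of_ne_of_ne, inputProb, catalystProb,
      outputProb] <;> ring

lemma sum_levelSwap_snd (t : ℝ) (k : Fin 2) :
    ∑ i, inputProb t (levelSwap (i, k)).1 * catalystProb t (levelSwap (i, k)).2 =
      catalystProb t k := by
  fin_cases k <;>
    simp [Fin.sum_univ_three, levelSwap, Equiv.swap_apply_of_ne_of_ne, inputProb,
      catalystProb] <;> ring

lemma sum_inputProb (t : ℝ) : ∑ i, inputProb t i = 1 := by
  simp [Fin.sum_univ_three, inputProb]; ring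

lemma sum_catalystProb (t : ℝ) : ∑ k, catalystProb t k = 1 := by
  simp [Fin.sum_univ_two, catalystProb]; ring

lemma sum_outputProb (t : ℝ) : ∑ i, outputProb t i = 1 := by
  simp [Fin.sum_univ_three, outputProb]; ring

lemma inputProb_pos {t : ℝ} (ht : t ∈ Set.Ioo (-1 : ℝ) 1) (i : Fin 3) : 0 < inputProb t i := by
  obtain ⟨h₁, h₂⟩ := ht
  fin_cases i <;> simp [inputProb] <;> linarith

lemma catalystProb_pos {t : ℝ} (ht : t ∈ Set.Ioo (-1 : ℝ) 1) (k : Fin 2) :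
    0 < catalystProb t k := by
  obtain ⟨h₁, h₂⟩ := ht
  fin_cases k <;> simp [catalystProb] <;> linarith

lemma outputProb_pos {t : ℝ} (ht : t ∈ Set.Ioo (-1 : ℝ) 1) (i : Fin 3) :
    0 < outputProb t i := by
  obtain ⟨h₁, h₂⟩ := ht
  fin_cases i <;> simp [outputProb] <;> nlinarith

lemma outputProb_zero : outputProb 0 = inputProb 0 := by
  ext i; fin_cases i <;> norm_num [outputProb, inputProb]

lemma hasDerivAt_inputProb (i : Fin 3) :
    HasDerivAt (fun t => inputProb t i) (![1 / 21, 0, -1 / 21] i) 0 := by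
  have hid := hasDerivAt_id' (0 : ℝ)
  fin_cases i <;> simp [inputProb]
  · exact ((hid.const_add 1).div_const 21).congr_deriv (by norm_num)
  · exact hasDerivAt_const _ _
  · exact ((hid.const_sub 16).div_const 21).congr_deriv (by norm_num)

lemma hasDerivAt_outputProb (i : Fin 3) :
    HasDerivAt (fun t => outputProb t i) (![2 / 105, 6 / 105, -8 / 105] i) 0 := by
  have hid := hasDerivAt_id' (0 : ℝ)
  fin_cases i <;> simp [outputProb]
  · exact (((hid.const_add 5).fun_pow 2).div_const 525).congr_deriv (by norm_num)
  · exact ((((hid.const_mul 30).const_add 100).fun_sub ((hid.fun_pow 2).const_mul 2)).div_const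
      525).congr_deriv (by norm_num)
  · exact (((hid.const_sub 20).fun_pow 2).div_const 525).congr_deriv (by norm_num)

lemma exists_mul_sum_rpow_sub_neg {α : ℝ} (hα0 : α ≠ 0) (hα1 : α ≠ 1) :
    ∃ t ∈ Set.Ioo (-1 : ℝ) 1,
      (1 - α) * (∑ i, outputProb t i ^ α - ∑ i, inputProb t i ^ α) < 0 := by
  have hpos : ∀ i, inputProb 0 i ≠ 0 := by
    intro i; fin_cases i <;> norm_num [inputProb]
  have hD := ((hasDerivAt_sum_rpow α hasDerivAt_outputProb (outputProb_zero ▸ hpos)).sub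
    (hasDerivAt_sum_rpow α hasDerivAt_inputProb hpos)).const_mul (1 - α)
  have hslope : ∑ i, ![2 / 105, 6 / 105, -8 / 105] i * α * outputProb 0 i ^ (α - 1) -
      ∑ i, ![1 / 21, 0, -1 / 21] i * α * inputProb 0 i ^ (α - 1) =
      -(α / 35) * ((1 / 21 : ℝ) ^ (α - 1) - 2 * (4 * (1 / 21) : ℝ) ^ (α - 1) +
        (4 * 4 * (1 / 21) : ℝ) ^ (α - 1)) := by
    simp only [outputProb_zero, inputProb, Fin.sum_univ_three, Fin.isValue, cons_val_zero,
      cons_val_one, cons_val]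
    norm_num
    ring
  have hD0 : (1 - α) * (∑ i, ![2 / 105, 6 / 105, -8 / 105] i * α * outputProb 0 i ^ (α - 1) -
      ∑ i, ![1 / 21, 0, -1 / 21] i * α * inputProb 0 i ^ (α - 1)) ≠ 0 := by
    rw [hslope]
    exact mul_ne_zero (sub_ne_zero.mpr hα1.symm) (mul_ne_zero (by simpa using hα0)
      (rpow_sub_two_mul_rpow_add_rpow_ne_zero (by norm_num) (by norm_num) (by norm_num)
        (sub_ne_zero.mpr hα1)))
  obtain ⟨t, ht, hlt⟩ := exists_lt_of_hasDerivAt_ne_zero hD hD0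
    (Ioo_mem_nhds (by norm_num : (-1 : ℝ) < 0) one_pos)
  refine ⟨t, ht, ?_⟩
  simpa [outputProb_zero] using hlt

/-- For every `α ∉ {0,1}`, the Rényi entropy `S_α` is not a monotone under
correlating-catalytic transitions: there is such a transition between full-rank density
matrices that strictly decreases `S_α`. -/
theorem stmt15 (α : ℝ) (hα0 : α ≠ 0) (hα1 : α ≠ 1) :
    ∃ (n : ℕ) (ρ ρ' : Matrix (Fin n) (Fin n) ℂ),
      IsDensityMatrix ρ ∧ IsDensityMatrix ρ' ∧ ρ.rank = n ∧ ρ'.rank = n ∧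
      (∃ (m : ℕ) (σ : Matrix (Fin m) (Fin m) ℂ),
        IsDensityMatrix σ ∧
        ∃ U ∈ Matrix.unitaryGroup (Fin n × Fin m) ℂ,
          ptrace2 (U * (ρ ⊗ₖ σ) * Uᴴ) = ρ' ∧
          ptrace1 (U * (ρ ⊗ₖ σ) * Uᴴ) = σ) ∧
      renyi α ρ' < renyi α ρ := by
  obtain ⟨t, ht, hgap⟩ := exists_mul_sum_rpow_sub_neg hα0 hα1
  refine ⟨3, diagonal fun i => (inputProb t i : ℂ), diagonal fun i => (outputProb t i : ℂ),
    isDensityMatrix_diagonal_ofReal (fun i => (inputProb_pos ht i).le) (sum_inputProb t),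
    isDensityMatrix_diagonal_ofReal (fun i => (outputProb_pos ht i).le) (sum_outputProb t),
    (rank_diagonal_ofReal fun i => (inputProb_pos ht i).ne').trans (Fintype.card_fin 3),
    (rank_diagonal_ofReal fun i => (outputProb_pos ht i).ne').trans (Fintype.card_fin 3),
    ⟨2, diagonal fun k => (catalystProb t k : ℂ),
      isDensityMatrix_diagonal_ofReal (fun k => (catalystProb_pos ht k).le) (sum_catalystProb t),
      levelSwap.permMatrix ℂ, permMatrix_mem_unitaryGroup levelSwap, ?_, ?_⟩, ?_⟩
  · simp only [ptrace2_permMatrix_conj_kronecker_diagonal, sum_levelSwap_fst]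
  · simp only [ptrace1_permMatrix_conj_kronecker_diagonal, sum_levelSwap_snd]
  · rw [renyi_diagonal_ofReal, renyi_diagonal_ofReal]
    have hsum_pos {p : Fin 3 → ℝ} (hp : ∀ i, 0 < p i) : 0 < ∑ i, p i ^ α :=
      Finset.sum_pos (fun i _ => Real.rpow_pos_of_pos (hp i) α) Finset.univ_nonempty
    exact inv_mul_log_lt_inv_mul_log (hsum_pos (outputProb_pos ht)) (hsum_pos (inputProb_pos ht))
      hgap
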